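/- arXiv:1903.07157 — 3 statements merged into one kernel-verified Lean document; each statement's English description precedes it below -/
import Mathlib

section
/- Suppose the machine policy Q has full support, i.e. Q(m_t | h^{t-1}, m^{t-1}) > 0 for all t and all arguments. If human models P₁ and P₂ both maximize the causally conditioned entropy H_{PQ}(H^T‖M^T) over P ∈ 𝒫^Q_{𝓕,𝓖}, then P₁(h^T‖m^T) = P₂(h^T‖m^T) for every (h^T,m^T) ∈ 𝓗^T×𝓜^T; i.e., the solution of the human estimation problem is unique as a causally conditioned distribution. -/
/-! Common framework: finite-horizon human–machine interaction processes.
Times are 0-indexed: step `t : Fin T` corresponds to the paper's step `t+1`.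
A human model gives conditional PMFs `P(h_t | h^{t-1}, m^t)`: the value
`p t h m a` may depend only on `h s` for `s < t`, on `m s` for `s ≤ t`, and on `a`.
A machine policy gives conditional PMFs `Q(m_t | h^{t-1}, m^{t-1})`: the value
`q t h m b` may depend only on `h s`, `m s` for `s < t`, and on `b`. -/

structure HumanModel (T : ℕ) (H M : Type*) [Fintype H] where
  p : Fin T → (Fin T → H) → (Fin T → M) → H → ℝ
  causal : ∀ (t : Fin T) (h h' : Fin T → H) (m m' : Fin T → M),
      (∀ s, s < t → h s = h' s) → (∀ s, s ≤ t → m s = m' s) → p t h m = p t h' m'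
  nonneg : ∀ t h m a, 0 ≤ p t h m a
  sum_one : ∀ t h m, ∑ a, p t h m a = 1

structure MachinePolicy (T : ℕ) (H M : Type*) [Fintype M] where
  q : Fin T → (Fin T → H) → (Fin T → M) → M → ℝ
  causal : ∀ (t : Fin T) (h h' : Fin T → H) (m m' : Fin T → M),
      (∀ s, s < t → h s = h' s) → (∀ s, s < t → m s = m' s) → q t h m = q t h' m'
  nonneg : ∀ t h m b, 0 ≤ q t h m b
  sum_one : ∀ t h m, ∑ b, q t h m b = 1

variable {T : ℕ} {H M : Type*} [Fintype H] [Fintype M]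

/-- Causally conditioned distribution of the human: `P(h^T ‖ m^T)`. -/
noncomputable def HumanModel.cc (P : HumanModel T H M) (h : Fin T → H) (m : Fin T → M) : ℝ :=
  ∏ t, P.p t h m (h t)

/-- Causally conditioned distribution of the machine: `Q(m^T ‖ h^T)`. -/
noncomputable def MachinePolicy.cc (Q : MachinePolicy T H M) (h : Fin T → H) (m : Fin T → M) : ℝ :=
  ∏ t, Q.q t h m (m t)

/-- Joint PMF `PQ(h^T, m^T)`. -/
noncomputable def jointPMF (P : HumanModel T H M) (Q : MachinePolicy T H M)
    (h : Fin T → H) (m : Fin T → M) : ℝ :=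
  P.cc h m * Q.cc h m

/-- Expectation `E_{PQ}[φ(H^T, M^T)]`. -/
noncomputable def expVal (P : HumanModel T H M) (Q : MachinePolicy T H M)
    (φ : (Fin T → H) → (Fin T → M) → ℝ) : ℝ :=
  ∑ h : Fin T → H, ∑ m : Fin T → M, jointPMF P Q h m * φ h m

/-- Causally conditioned entropy of the human, `H_{PQ}(H^T ‖ M^T)`. -/
noncomputable def humanEntropy (P : HumanModel T H M) (Q : MachinePolicy T H M) : ℝ :=
  ∑ h : Fin T → H, ∑ m : Fin T → M, jointPMF P Q h m * (- Real.log (P.cc h m))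

/-- Causally conditioned entropy of the machine, `H_{PQ}(M^T ‖ H^T)`. -/
noncomputable def machineEntropy (P : HumanModel T H M) (Q : MachinePolicy T H M) : ℝ :=
  ∑ h : Fin T → H, ∑ m : Fin T → M, jointPMF P Q h m * (- Real.log (Q.cc h m))

/-- The feasible set `𝒫^Q_{𝓕,𝓖}`: human models matching the equality feature moments `c_f`
and satisfying the inequality feature moment constraints `c_g`. -/
def Feasible {F G : Type*} [Fintype F] [Fintype G] (Q : MachinePolicy T H M)
    (f : F → (Fin T → H) → (Fin T → M) → ℝ) (g : G → (Fin T → H) → (Fin T → M) → ℝ)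
    (cf : F → ℝ) (cg : G → ℝ) (P : HumanModel T H M) : Prop :=
  (∀ i, expVal P Q (f i) = cf i) ∧ (∀ j, cg j ≤ expVal P Q (g j))

/-! ### Auxiliary development for the uniqueness proof -/

/-- Prefix product `∏_{s < t} P(h_s | h^{s-1}, m^s)`. -/
noncomputable def prefProd (P : HumanModel T H M) (t : ℕ)
    (h : Fin T → H) (m : Fin T → M) : ℝ :=
  ∏ s ∈ Finset.univ.filter (fun s : Fin T => (s : ℕ) < t), P.p s h m (h s)

lemma prefProd_zero (P : HumanModel T H M) (h : Fin T → H) (m : Fin T → M) :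
    prefProd P 0 h m = 1 := by
  simp [prefProd]

lemma prefProd_nonneg (P : HumanModel T H M) (t : ℕ) (h : Fin T → H) (m : Fin T → M) :
    0 ≤ prefProd P t h m :=
  Finset.prod_nonneg fun s _ => P.nonneg s h m (h s)

lemma prefProd_succ (P : HumanModel T H M) (t : ℕ) (ht : t < T)
    (h : Fin T → H) (m : Fin T → M) :
    prefProd P (t + 1) h m = prefProd P t h m * P.p ⟨t, ht⟩ h m (h ⟨t, ht⟩) := by
  unfold prefProd
  have hins : Finset.univ.filter (fun s : Fin T => (s : ℕ) < t + 1)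
      = insert (⟨t, ht⟩ : Fin T)
        (Finset.univ.filter (fun s : Fin T => (s : ℕ) < t)) := by
    ext s
    simp only [Finset.mem_filter, Finset.mem_univ, true_and, Finset.mem_insert, Fin.ext_iff]
    omega
  rw [hins, Finset.prod_insert (by simp)]
  ring

lemma prefProd_top (P : HumanModel T H M) (h : Fin T → H) (m : Fin T → M) :
    prefProd P T h m = P.cc h m := by
  unfold prefProd HumanModel.cc
  rw [Finset.filter_true_of_mem fun s _ => s.isLt]

lemma prefProd_causal (P : HumanModel T H M) (t : Fin T)
    (h h' : Fin T → H) (m m' : Fin T → M)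
    (hh : ∀ s, s < t → h s = h' s) (hm : ∀ s, s ≤ t → m s = m' s) :
    prefProd P t h m = prefProd P t h' m' := by
  unfold prefProd
  refine Finset.prod_congr rfl fun s hs => ?_
  simp only [Finset.mem_filter, Finset.mem_univ, true_and] at hs
  have hst : s < t := hs
  rw [P.causal s h h' m m'
      (fun u hu => hh u (lt_trans hu hst))
      (fun u hu => hm u (le_of_lt (lt_of_le_of_lt hu hst))),
    hh s hst]

/-- Conditional PMFs of the midpoint of two causally conditioned distributions. -/
noncomputable def midP (P₁ P₂ : HumanModel T H M) (t : Fin T)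
    (h : Fin T → H) (m : Fin T → M) (a : H) : ℝ :=
  if prefProd P₁ t h m + prefProd P₂ t h m = 0 then P₁.p t h m a
  else (prefProd P₁ t h m * P₁.p t h m a + prefProd P₂ t h m * P₂.p t h m a) /
    (prefProd P₁ t h m + prefProd P₂ t h m)

/-- The midpoint human model: its causally conditioned distribution is the average of
those of `P₁` and `P₂`. -/
noncomputable def midModel (P₁ P₂ : HumanModel T H M) : HumanModel T H M where
  p := midP P₁ P₂
  causal := by
    intro t h h' m m' hh hm
    funext a
    unfold midP
    rw [prefProd_causal P₁ t h h' m m' hh hm, prefProd_causal P₂ t h h' m m' hh hm,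
      P₁.causal t h h' m m' hh hm, P₂.causal t h h' m m' hh hm]
  nonneg := by
    intro t h m a
    unfold midP
    split_ifs with hD
    · exact P₁.nonneg t h m a
    · have h1 := prefProd_nonneg P₁ t h m
      have h2 := prefProd_nonneg P₂ t h m
      have hp1 := P₁.nonneg t h m a
      have hp2 := P₂.nonneg t h m a
      apply div_nonneg
      · nlinarith
      · linarith
  sum_one := by
    intro t h m
    unfold midP
    by_cases hD : prefProd P₁ t h m + prefProd P₂ t h m = 0
    · simp only [hD, if_pos rfl, if_true]
      exact P₁.sum_one t h m
    · simp only [if_neg hD]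
      rw [← Finset.sum_div, Finset.sum_add_distrib, ← Finset.mul_sum, ← Finset.mul_sum,
        P₁.sum_one t h m, P₂.sum_one t h m, mul_one, mul_one, div_self hD]

lemma midModel_pref (P₁ P₂ : HumanModel T H M) (h : Fin T → H) (m : Fin T → M) :
    ∀ t, t ≤ T → prefProd (midModel P₁ P₂) t h m
      = (prefProd P₁ t h m + prefProd P₂ t h m) / 2 := by
  intro t
  induction t with
  | zero => intro _; rw [prefProd_zero, prefProd_zero, prefProd_zero]; norm_num
  | succ t ih =>
    intro ht
    have htT : t < T := lt_of_lt_of_le (Nat.lt_succ_self t) ht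
    rw [prefProd_succ _ t htT, prefProd_succ _ t htT, prefProd_succ _ t htT,
      ih (le_of_lt htT)]
    have hval : ((⟨t, htT⟩ : Fin T) : ℕ) = t := rfl
    show (prefProd P₁ t h m + prefProd P₂ t h m) / 2 * midP P₁ P₂ ⟨t, htT⟩ h m (h ⟨t, htT⟩) = _
    unfold midP
    rw [hval]
    by_cases hD : prefProd P₁ t h m + prefProd P₂ t h m = 0
    · have h1 := prefProd_nonneg P₁ t h m
      have h2 := prefProd_nonneg P₂ t h m
      have e1 : prefProd P₁ t h m = 0 := by linarith
      have e2 : prefProd P₂ t h m = 0 := by linarith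
      rw [e1, e2]
      ring
    · rw [if_neg hD]
      field_simp
  
lemma midModel_cc (P₁ P₂ : HumanModel T H M) (h : Fin T → H) (m : Fin T → M) :
    (midModel P₁ P₂).cc h m = (P₁.cc h m + P₂.cc h m) / 2 := by
  rw [← prefProd_top, ← prefProd_top, ← prefProd_top, midModel_pref P₁ P₂ h m T le_rfl]

lemma expVal_midModel (P₁ P₂ : HumanModel T H M) (Q : MachinePolicy T H M)
    (φ : (Fin T → H) → (Fin T → M) → ℝ) :
    expVal (midModel P₁ P₂) Q φ = (expVal P₁ Q φ + expVal P₂ Q φ) / 2 := by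
  unfold expVal jointPMF
  rw [eq_div_iff (two_ne_zero)]
  rw [Finset.sum_mul, ← Finset.sum_add_distrib]
  refine Finset.sum_congr rfl fun h _ => ?_
  rw [Finset.sum_mul, ← Finset.sum_add_distrib]
  refine Finset.sum_congr rfl fun m _ => ?_
  rw [midModel_cc]
  ring

lemma cc_nonneg (P : HumanModel T H M) (h : Fin T → H) (m : Fin T → M) : 0 ≤ P.cc h m :=
  Finset.prod_nonneg fun t _ => P.nonneg t h m (h t)

lemma humanEntropy_eq_negMulLog (P : HumanModel T H M) (Q : MachinePolicy T H M) :
    humanEntropy P Q = ∑ h : Fin T → H, ∑ m : Fin T → M,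
      Q.cc h m * Real.negMulLog (P.cc h m) := by
  unfold humanEntropy jointPMF
  refine Finset.sum_congr rfl fun h _ => Finset.sum_congr rfl fun m _ => ?_
  rw [Real.negMulLog]
  ring

lemma negMulLog_avg_lt {x y : ℝ} (hx : 0 ≤ x) (hy : 0 ≤ y) (hxy : x ≠ y) :
    (Real.negMulLog x + Real.negMulLog y) / 2 < Real.negMulLog ((x + y) / 2) := by
  have hc := Real.strictConcaveOn_negMulLog
  have := hc.2 (Set.mem_Ici.2 hx) (Set.mem_Ici.2 hy) hxy
    (by norm_num : (0:ℝ) < 1/2) (by norm_num : (0:ℝ) < 1/2)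
    (by norm_num : (1/2 : ℝ) + 1/2 = 1)
  have e1 : (1/2 : ℝ) • x + (1/2 : ℝ) • y = (x + y) / 2 := by
    simp [smul_eq_mul]; ring
  have e2 : (1/2 : ℝ) • Real.negMulLog x + (1/2 : ℝ) • Real.negMulLog y
      = (Real.negMulLog x + Real.negMulLog y) / 2 := by
    simp [smul_eq_mul]; ring
  rw [e1, e2] at this
  exact this

lemma negMulLog_avg_le {x y : ℝ} (hx : 0 ≤ x) (hy : 0 ≤ y) :
    (Real.negMulLog x + Real.negMulLog y) / 2 ≤ Real.negMulLog ((x + y) / 2) := by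
  rcases eq_or_ne x y with rfl | hxy
  · have : (x + x) / 2 = x := by ring
    rw [this]
    linarith
  · exact le_of_lt (negMulLog_avg_lt hx hy hxy)

lemma mcc_pos (Q : MachinePolicy T H M)
    (hQpos : ∀ (t : Fin T) (h : Fin T → H) (m : Fin T → M) (b : M), 0 < Q.q t h m b)
    (h : Fin T → H) (m : Fin T → M) : 0 < Q.cc h m :=
  Finset.prod_pos fun t _ => hQpos t h m (m t)

/-- if the machine policy `Q` has full support and the human models `P₁`, `P₂`
both maximize the causally conditioned entropy `H_{PQ}(H^T‖M^T)` over the feasible set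
`𝒫^Q_{𝓕,𝓖}`, then they agree as causally conditioned distributions:
`P₁(h^T‖m^T) = P₂(h^T‖m^T)` for all `(h^T, m^T)`. -/
theorem maxent_solution_unique [NeZero T] [Nonempty H] [Nonempty M]
    {F G : Type*} [Fintype F] [Fintype G]
    (Q : MachinePolicy T H M)
    (hQpos : ∀ (t : Fin T) (h : Fin T → H) (m : Fin T → M) (b : M), 0 < Q.q t h m b)
    (f : F → (Fin T → H) → (Fin T → M) → ℝ) (g : G → (Fin T → H) → (Fin T → M) → ℝ)
    (cf : F → ℝ) (cg : G → ℝ)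
    (P₁ P₂ : HumanModel T H M)
    (hP₁ : Feasible Q f g cf cg P₁) (hP₂ : Feasible Q f g cf cg P₂)
    (hmax₁ : ∀ P : HumanModel T H M, Feasible Q f g cf cg P →
      humanEntropy P Q ≤ humanEntropy P₁ Q)
    (hmax₂ : ∀ P : HumanModel T H M, Feasible Q f g cf cg P →
      humanEntropy P Q ≤ humanEntropy P₂ Q) :
    ∀ (h : Fin T → H) (m : Fin T → M), P₁.cc h m = P₂.cc h m := by
  intro h₀ m₀
  by_contra hne
  -- The midpoint model is feasible.
  have hmid_feas : Feasible Q f g cf cg (midModel P₁ P₂) := by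
    constructor
    · intro i
      rw [expVal_midModel, hP₁.1 i, hP₂.1 i]
      ring
    · intro j
      rw [expVal_midModel]
      have h1 := hP₁.2 j
      have h2 := hP₂.2 j
      linarith
  -- Both maximizers achieve the same entropy.
  have hE : humanEntropy P₂ Q = humanEntropy P₁ Q :=
    le_antisymm (hmax₁ _ hP₂) (hmax₂ _ hP₁)
  -- Strict concavity: the midpoint has strictly larger entropy.
  have hlt : (humanEntropy P₁ Q + humanEntropy P₂ Q) / 2
      < humanEntropy (midModel P₁ P₂) Q := by
    rw [humanEntropy_eq_negMulLog, humanEntropy_eq_negMulLog, humanEntropy_eq_negMulLog,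
      div_eq_inv_mul, ← Finset.sum_add_distrib, Finset.mul_sum]
    have key : ∀ (h : Fin T → H) (m : Fin T → M),
        (2 : ℝ)⁻¹ * (Q.cc h m * Real.negMulLog (P₁.cc h m)
          + Q.cc h m * Real.negMulLog (P₂.cc h m))
        ≤ Q.cc h m * Real.negMulLog ((midModel P₁ P₂).cc h m) := by
      intro h m
      rw [midModel_cc]
      have hq := mcc_pos Q hQpos h m
      have hconc := negMulLog_avg_le (cc_nonneg P₁ h m) (cc_nonneg P₂ h m)
      nlinarith
    refine Finset.sum_lt_sum (fun h _ => ?_) ⟨h₀, Finset.mem_univ h₀, ?_⟩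
    · rw [← Finset.sum_add_distrib, Finset.mul_sum]
      exact Finset.sum_le_sum fun m _ => key h m
    · rw [← Finset.sum_add_distrib, Finset.mul_sum]
      refine Finset.sum_lt_sum (fun m _ => key h₀ m) ⟨m₀, Finset.mem_univ m₀, ?_⟩
      rw [midModel_cc]
      have hq := mcc_pos Q hQpos h₀ m₀
      have hconc := negMulLog_avg_lt (cc_nonneg P₁ h₀ m₀) (cc_nonneg P₂ h₀ m₀) hne
      nlinarith
  have hmid_le := hmax₁ _ hmid_feas
  linarith
end

section
/- (Telescoping partition-function identity, Lemma 2 of Ziebart et al. used throughout the paper.) For every machine policy Q, every λ = (λ_f, λ_g) ∈ ℝ^𝓕 × ℝ^𝓖, and every human model P′, the causal cross-entropy of the causal Gibbs model P_λ satisfies E_{P′Q}[−log P_λ(H^T‖M^T)] = Σ_{m_1∈𝓜} Q(m_1)·log Z_λ(m_1) − λ_f·E_{P′Q}[f(H^T,M^T)] − λ_g·E_{P′Q}[g(H^T,M^T)], where P_λ(h^T‖m^T) := ∏_{t=1}^T P_λ(h_t | h^{t-1}, m^t). -/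
variable {T : ℕ} {H M : Type*} [Fintype H] [Fintype M]

lemma idx_lt (T k : ℕ) [NeZero T] : T - 1 - k < T := by
  have := Nat.pos_of_ne_zero (NeZero.ne T); omega

variable [NeZero T]

/-- Backward recursion for `Z_λ(h_t | h^{t-1}, m^t)`, parameterized by fuel `k = (T-1) - t`.
`Zaux Q φ k h m` is `Z_λ(h_t | h^{t-1}, m^t)` at (0-indexed) step `t = T - 1 - k`, where the
current human action `h_t` is read off as `h t`. The terminal exponent `φ h m` plays the
role of `λ_f·f(h^T,m^T) + λ_g·g(h^T,m^T)`. -/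
noncomputable def Zaux (Q : MachinePolicy T H M)
    (φ : (Fin T → H) → (Fin T → M) → ℝ) :
    ℕ → (Fin T → H) → (Fin T → M) → ℝ
  | 0, h, m => Real.exp (φ h m)
  | k + 1, h, m =>
      Real.exp (∑ b : M, Q.q ⟨T - 1 - k, idx_lt T k⟩ h m b *
        Real.log (∑ a : H, Zaux Q φ k
          (Function.update h ⟨T - 1 - k, idx_lt T k⟩ a)
          (Function.update m ⟨T - 1 - k, idx_lt T k⟩ b)))

/-- `Z_λ(h_t | h^{t-1}, m^t)` at step `t`, with `h_t = h t`. -/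
noncomputable def Zcond (Q : MachinePolicy T H M)
    (φ : (Fin T → H) → (Fin T → M) → ℝ) (t : Fin T)
    (h : Fin T → H) (m : Fin T → M) : ℝ :=
  Zaux Q φ (T - 1 - t.val) h m

/-- `Z_λ(h^{t-1}, m^t) = Σ_{h_t} Z_λ(h_t | h^{t-1}, m^t)`. -/
noncomputable def Zmarg (Q : MachinePolicy T H M)
    (φ : (Fin T → H) → (Fin T → M) → ℝ) (t : Fin T)
    (h : Fin T → H) (m : Fin T → M) : ℝ :=
  ∑ a : H, Zcond Q φ t (Function.update h t a) m

variable [Nonempty H] [Nonempty M]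

/-- `Σ_{m_1} Q(m_1) · log Z_λ(m_1)` (the log-partition part of the dual objective).
By causality of `Q` and of the recursion, the choice of base sequences is immaterial. -/
noncomputable def dualPartition (Q : MachinePolicy T H M)
    (φ : (Fin T → H) → (Fin T → M) → ℝ) : ℝ :=
  ∑ b : M, Q.q 0 (Classical.arbitrary _) (Classical.arbitrary _) b *
    Real.log (Zmarg Q φ 0 (Classical.arbitrary _)
      (Function.update (Classical.arbitrary (Fin T → M)) 0 b))

/-- `P` is the causal Gibbs human model `P_λ` associated with machine policy `Q` and
terminal exponent `φ`: `P_λ(h_t | h^{t-1}, m^t) = Z_λ(h_t | h^{t-1}, m^t) / Z_λ(h^{t-1}, m^t)`. -/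
def IsGibbs (Q : MachinePolicy T H M)
    (φ : (Fin T → H) → (Fin T → M) → ℝ) (P : HumanModel T H M) : Prop :=
  ∀ (t : Fin T) (h : Fin T → H) (m : Fin T → M) (a : H),
    P.p t h m a = Zcond Q φ t (Function.update h t a) m / Zmarg Q φ t h m

/-! By the Gibbs form, `-log P_λ(h^T‖m^T)` is the sum over `t` of
`log Z_λ(h^{t-1}, m^t) - log Z_λ(h_t | h^{t-1}, m^t)`. The backward recursion writes
`log Z_λ(h_t | h^{t-1}, m^t)` as the `Q`-average over `m_{t+1}` of `log Z_λ(h^t, m^{t+1})`,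
and under any joint law `P′Q` averaging a function of `(h^t, m^{t+1})` over `m_{t+1}` with `Q`
leaves its expectation unchanged. So the expectations telescope, leaving `E[log Z_λ(m_1)]`,
which is the dual log-partition term, minus
`E[log Z_λ(h_T | h^{T-1}, m^T)] = E[λ_f·f + λ_g·g]`.
-/

theorem Fintype.sum_sum_update {ι X β : Type*} [DecidableEq ι] [Fintype ι] [Fintype X]
    [AddCommMonoid β] (i : ι) (F : (ι → X) → β) :
    ∑ v, ∑ x, F (Function.update v i x) = Fintype.card X • ∑ v, F v := by
  let e := (Equiv.funSplitAt i X).symm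
  have he : ∀ x y r, Function.update (e (x, r)) i y = e (y, r) := fun x y r => by
    funext j
    by_cases hj : j = i <;> simp [e, Equiv.funSplitAt, Equiv.piSplitAt, Function.update, hj]
  rw [← e.sum_comp, ← e.sum_comp, Fintype.sum_prod_type, Fintype.sum_prod_type]
  simp only [he]
  rw [Finset.sum_const, Finset.card_univ, Finset.sum_comm]

theorem Function.update_eq_update_of_lt_succ {n : ℕ} {X : Type*} {i : Fin n} {v w : Fin n → X}
    (hvw : ∀ s : Fin n, s.val < i → v s = w s) (x : X) (s : Fin n) (hs : s.val < i + 1) :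
    Function.update v i x s = Function.update w i x s := by
  rcases eq_or_ne s i with rfl | hsi
  · simp
  · rw [Function.update_of_ne hsi, Function.update_of_ne hsi]
    exact hvw s (by have := Fin.val_ne_of_ne hsi; omega)

section DependsOnPrefix

omit [Fintype H] [Fintype M] [NeZero T] [Nonempty H] [Nonempty M]

def DependsOnPrefix (a b : ℕ) (ψ : (Fin T → H) → (Fin T → M) → ℝ) : Prop :=
  ∀ h h' m m', (∀ s : Fin T, s.val < a → h s = h' s) →
    (∀ s : Fin T, s.val < b → m s = m' s) → ψ h m = ψ h' m'

variable {a b : ℕ} {ψ : (Fin T → H) → (Fin T → M) → ℝ}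

theorem DependsOnPrefix.mono {a' b' : ℕ} (hψ : DependsOnPrefix a b ψ) (ha : a ≤ a')
    (hb : b ≤ b') : DependsOnPrefix a' b' ψ :=
  fun h h' m m' hh hm => hψ h h' m m' (fun s hs => hh s (by omega)) (fun s hs => hm s (by omega))

theorem DependsOnPrefix.comp (hψ : DependsOnPrefix a b ψ) (g : ℝ → ℝ) :
    DependsOnPrefix a b (fun h m => g (ψ h m)) :=
  fun h h' m m' hh hm => congrArg g (hψ h h' m m' hh hm)

theorem DependsOnPrefix.comp_update_left {n : Fin T} (hψ : DependsOnPrefix (n + 1) b ψ) (x : H) :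
    DependsOnPrefix n b (fun h m => ψ (Function.update h n x) m) :=
  fun _ _ _ _ hh hm => hψ _ _ _ _ (Function.update_eq_update_of_lt_succ hh x) hm

theorem DependsOnPrefix.comp_update_right {n : Fin T} (hψ : DependsOnPrefix a (n + 1) ψ) (y : M) :
    DependsOnPrefix a n (fun h m => ψ h (Function.update m n y)) :=
  fun _ _ _ _ hh hm => hψ _ _ _ _ hh (Function.update_eq_update_of_lt_succ hm y)

theorem DependsOnPrefix.update_left_eq (hψ : DependsOnPrefix a b ψ) {n : Fin T} (hn : a ≤ n)
    (h : Fin T → H) (m : Fin T → M) (x : H) : ψ (Function.update h n x) m = ψ h m :=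
  hψ _ _ _ _ (fun s hs => Function.update_of_ne (Fin.ne_of_val_ne (by omega)) _ _) (fun _ _ => rfl)

theorem DependsOnPrefix.update_right_eq (hψ : DependsOnPrefix a b ψ) {n : Fin T} (hn : b ≤ n)
    (h : Fin T → H) (m : Fin T → M) (y : M) : ψ h (Function.update m n y) = ψ h m :=
  hψ _ _ _ _ (fun _ _ => rfl) (fun s hs => Function.update_of_ne (Fin.ne_of_val_ne (by omega)) _ _)

theorem DependsOnPrefix.eq_of_zero (hψ : DependsOnPrefix 0 0 ψ) (h h' : Fin T → H)
    (m m' : Fin T → M) : ψ h m = ψ h' m' :=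
  hψ h h' m m' (fun _ hs => absurd hs (Nat.not_lt_zero _))
    (fun _ hs => absurd hs (Nat.not_lt_zero _))

end DependsOnPrefix

section Averaging

omit [Fintype H] [NeZero T] [Nonempty H] [Nonempty M]

def MachinePolicy.averageAt (Q : MachinePolicy T H M) (n : Fin T)
    (ψ : (Fin T → H) → (Fin T → M) → ℝ) (h : Fin T → H) (m : Fin T → M) : ℝ :=
  ∑ b, Q.q n h m b * ψ h (Function.update m n b)

theorem DependsOnPrefix.averageAt {ψ : (Fin T → H) → (Fin T → M) → ℝ}
    (Q : MachinePolicy T H M) {n : Fin T} (hψ : DependsOnPrefix n (n + 1) ψ) :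
    DependsOnPrefix n n (Q.averageAt n ψ) :=
  fun h h' m m' hh hm => Finset.sum_congr rfl fun b _ =>
    congrArg₂ (· * ·) (congrFun (Q.causal n h h' m m' hh hm) b)
      (hψ.comp_update_right b h h' m m' hh hm)

theorem MachinePolicy.averageAt_of_dependsOnPrefix {ψ : (Fin T → H) → (Fin T → M) → ℝ}
    (Q : MachinePolicy T H M) {a : ℕ} {n : Fin T} (hψ : DependsOnPrefix a n ψ) :
    Q.averageAt n ψ = ψ := by
  funext h m
  simp only [MachinePolicy.averageAt, hψ.update_right_eq le_rfl, ← Finset.sum_mul, Q.sum_one,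
    one_mul]

end Averaging

section PrefixSum

omit [NeZero T] [Nonempty H] [Nonempty M]

variable (P : HumanModel T H M) (Q : MachinePolicy T H M)

def prefixWeight (n : ℕ) (h : Fin T → H) (m : Fin T → M) : ℝ :=
  ∏ t with t.val < n, P.p t h m (h t) * Q.q t h m (m t)

def prefixSum (n : ℕ) (ψ : (Fin T → H) → (Fin T → M) → ℝ) : ℝ :=
  ∑ h, ∑ m, prefixWeight P Q n h m * ψ h m

theorem prefixSum_length (ψ : (Fin T → H) → (Fin T → M) → ℝ) :
    prefixSum P Q T ψ = expVal P Q ψ := by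
  simp [prefixSum, prefixWeight, expVal, jointPMF, HumanModel.cc, MachinePolicy.cc,
    Finset.prod_mul_distrib]

theorem prefixWeight_succ (n : Fin T) (h : Fin T → H) (m : Fin T → M) :
    prefixWeight P Q (n + 1) h m =
      prefixWeight P Q n h m * (P.p n h m (h n) * Q.q n h m (m n)) := by
  have hfilter : Finset.univ.filter (fun t : Fin T => t.val < n + 1) =
      insert n (Finset.univ.filter (fun t : Fin T => t.val < n)) := by
    ext t
    simp only [Finset.mem_filter, Finset.mem_univ, true_and, Finset.mem_insert, Fin.ext_iff]
    omega
  rw [prefixWeight, hfilter, Finset.prod_insert (by simp), mul_comm]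
  rfl

theorem dependsOnPrefix_prefixWeight (n : ℕ) : DependsOnPrefix n n (prefixWeight P Q n) :=
  fun h h' m m' hh hm => Finset.prod_congr rfl fun t ht => by
    have htn : t.val < n := (Finset.mem_filter.mp ht).2
    rw [P.causal t h h' m m' (fun s hs => hh s (by omega)) (fun s hs => hm s (by omega)),
      Q.causal t h h' m m' (fun s hs => hh s (by omega)) (fun s hs => hm s (by omega)),
      hh t htn, hm t htn]

theorem card_mul_prefixSum_succ (n : Fin T) {ψ : (Fin T → H) → (Fin T → M) → ℝ}
    (hψ : ∀ h m x, ψ (Function.update h n x) m = ψ h m) :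
    (Fintype.card H * Fintype.card M : ℝ) * prefixSum P Q (n + 1) ψ =
      prefixSum P Q n (Q.averageAt n ψ) := by
  have hW := dependsOnPrefix_prefixWeight P Q n
  have sum_out_h : (Fintype.card H : ℝ) * prefixSum P Q (n + 1) ψ =
      ∑ h, ∑ m, prefixWeight P Q n h m * Q.q n h m (m n) * ψ h m := by
    rw [prefixSum, Finset.sum_comm, Finset.mul_sum, Finset.sum_comm]
    refine Finset.sum_congr rfl fun m _ => ?_
    rw [← nsmul_eq_mul, ← Fintype.sum_sum_update n]
    refine Finset.sum_congr rfl fun h _ => ?_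
    have hpast : ∀ x, ∀ s < n, Function.update h n x s = h s :=
      fun x s hs => Function.update_of_ne (Fin.ne_of_lt hs) _ _
    have hP x : P.p n (Function.update h n x) m = P.p n h m :=
      P.causal n _ h m m (hpast x) (fun _ _ => rfl)
    have hQ x : Q.q n (Function.update h n x) m = Q.q n h m :=
      Q.causal n _ h m m (hpast x) (fun _ _ => rfl)
    simp only [prefixWeight_succ, hW.update_left_eq le_rfl, Function.update_self, hψ, hP, hQ]
    rw [← Finset.sum_mul, ← Finset.mul_sum, ← Finset.sum_mul, P.sum_one, one_mul]
  have sum_out_m : (Fintype.card M : ℝ) *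
      ∑ h, ∑ m, prefixWeight P Q n h m * Q.q n h m (m n) * ψ h m =
      prefixSum P Q n (Q.averageAt n ψ) := by
    rw [Finset.mul_sum]
    refine Finset.sum_congr rfl fun h _ => ?_
    rw [← nsmul_eq_mul, ← Fintype.sum_sum_update n]
    refine Finset.sum_congr rfl fun m _ => ?_
    have hQ y : Q.q n h (Function.update m n y) = Q.q n h m :=
      Q.causal n h h _ m (fun _ _ => rfl) fun s hs => Function.update_of_ne (Fin.ne_of_lt hs) _ _
    simp only [MachinePolicy.averageAt, hW.update_right_eq le_rfl, Function.update_self, hQ,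
      Finset.mul_sum, mul_assoc]
  rw [mul_comm (Fintype.card H : ℝ), mul_assoc, sum_out_h, sum_out_m]

end PrefixSum

section Expectation

omit [NeZero T]

variable (P : HumanModel T H M) (Q : MachinePolicy T H M)

-- The steps from `n` on carry no weight in `prefixSum`; each contributes a factor `|H| |M|`.
omit [Nonempty H] [Nonempty M] in
theorem prefixSum_eq_pow_mul_expVal {n : ℕ} (hn : n ≤ T)
    {ψ : (Fin T → H) → (Fin T → M) → ℝ} (hψ : DependsOnPrefix n n ψ) :
    prefixSum P Q n ψ = (Fintype.card H * Fintype.card M : ℝ) ^ (T - n) * expVal P Q ψ := by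
  induction hn using Nat.decreasingInduction with
  | self => rw [Nat.sub_self, pow_zero, one_mul, prefixSum_length]
  | of_succ k hk ih =>
    have hstep := card_mul_prefixSum_succ P Q ⟨k, hk⟩ (hψ.update_left_eq le_rfl)
    rw [Q.averageAt_of_dependsOnPrefix hψ, ih (hψ.mono k.le_succ k.le_succ)] at hstep
    rw [← hstep, show T - k = T - (k + 1) + 1 by omega, pow_succ]
    ring

theorem expVal_averageAt (n : Fin T) {ψ : (Fin T → H) → (Fin T → M) → ℝ}
    (hψ : DependsOnPrefix n (n + 1) ψ) : expVal P Q (Q.averageAt n ψ) = expVal P Q ψ := by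
  have hstep := card_mul_prefixSum_succ P Q n (hψ.update_left_eq le_rfl)
  rw [prefixSum_eq_pow_mul_expVal P Q n.isLt.le (hψ.averageAt Q),
    prefixSum_eq_pow_mul_expVal P Q n.isLt (hψ.mono (Nat.le_add_right _ 1) le_rfl),
    show T - n = T - (n + 1) + 1 by omega, pow_succ] at hstep
  exact mul_left_cancel₀ (by positivity) (hstep.symm.trans (by ring))

theorem expVal_const (c : ℝ) : expVal P Q (fun _ _ => c) = c := by
  have h0 := prefixSum_eq_pow_mul_expVal P Q (Nat.zero_le T) (ψ := fun _ _ => c)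
    (fun _ _ _ _ _ _ => rfl)
  simp only [prefixSum, prefixWeight, not_lt_zero, Finset.filter_false, Finset.prod_empty,
    one_mul, Finset.sum_const, Finset.card_univ, Fintype.card_pi, Finset.prod_const,
    Fintype.card_fin, nsmul_eq_mul, Nat.cast_pow, tsub_zero] at h0
  exact mul_left_cancel₀ (by positivity) (h0.symm.trans (by ring))

omit [Nonempty H] [Nonempty M]

theorem expVal_add (ψ χ : (Fin T → H) → (Fin T → M) → ℝ) :
    expVal P Q (fun h m => ψ h m + χ h m) = expVal P Q ψ + expVal P Q χ := by
  simp only [expVal, mul_add, Finset.sum_add_distrib]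

theorem expVal_sub (ψ χ : (Fin T → H) → (Fin T → M) → ℝ) :
    expVal P Q (fun h m => ψ h m - χ h m) = expVal P Q ψ - expVal P Q χ := by
  simp only [expVal, mul_sub, Finset.sum_sub_distrib]

theorem expVal_const_mul (c : ℝ) (ψ : (Fin T → H) → (Fin T → M) → ℝ) :
    expVal P Q (fun h m => c * ψ h m) = c * expVal P Q ψ := by
  simp only [expVal, Finset.mul_sum, mul_left_comm]

theorem expVal_sum {ι : Type*} (s : Finset ι)
    (ψ : ι → (Fin T → H) → (Fin T → M) → ℝ) :
    expVal P Q (fun h m => ∑ i ∈ s, ψ i h m) = ∑ i ∈ s, expVal P Q (ψ i) := by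
  simp only [expVal, Finset.mul_sum]
  exact (Finset.sum_congr rfl fun _ _ => Finset.sum_comm).trans Finset.sum_comm

end Expectation

section Partition

omit [Nonempty H] [Nonempty M]

variable (Q : MachinePolicy T H M) (φ : (Fin T → H) → (Fin T → M) → ℝ)

theorem Zcond_pos (t : Fin T) (h : Fin T → H) (m : Fin T → M) : 0 < Zcond Q φ t h m := by
  unfold Zcond
  cases T - 1 - t.val <;> exact Real.exp_pos _

theorem dependsOnPrefix_Zaux (k : ℕ) : DependsOnPrefix (T - k) (T - k) (Zaux Q φ k) := by
  induction k with
  | zero =>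
    intro h h' m m' hh hm
    obtain rfl : h = h' := funext fun s => hh s s.isLt
    obtain rfl : m = m' := funext fun s => hm s s.isLt
    rfl
  | succ k ih =>
    set i : Fin T := ⟨T - 1 - k, idx_lt T k⟩
    have hi : i.val = T - 1 - k := rfl
    have ih' : DependsOnPrefix (i + 1) (i + 1) (Zaux Q φ k) := ih.mono (by omega) (by omega)
    intro h h' m m' hh hm
    simp only [Zaux]
    refine congrArg Real.exp (Finset.sum_congr rfl fun b _ => ?_)
    rw [Q.causal i h h' m m' (fun s hs => hh s (by omega)) (fun s hs => hm s (by omega))]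
    congr 2
    exact Finset.sum_congr rfl fun a _ => (ih'.comp_update_left a).comp_update_right b h h' m m'
      (fun s hs => hh s (by omega)) (fun s hs => hm s (by omega))

theorem dependsOnPrefix_Zcond (t : Fin T) : DependsOnPrefix (t + 1) (t + 1) (Zcond Q φ t) :=
  (dependsOnPrefix_Zaux Q φ _).mono (by omega) (by omega)

theorem dependsOnPrefix_Zmarg (t : Fin T) : DependsOnPrefix t (t + 1) (Zmarg Q φ t) :=
  fun h h' m m' hh hm => Finset.sum_congr rfl fun a _ =>
    (dependsOnPrefix_Zcond Q φ t).comp_update_left a h h' m m' hh hm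

theorem Zcond_of_val_add_one_eq {t : Fin T} (ht : t.val + 1 = T) (h : Fin T → H)
    (m : Fin T → M) : Zcond Q φ t h m = Real.exp (φ h m) := by
  rw [Zcond, show T - 1 - t.val = 0 by omega, Zaux]

theorem log_Zcond_eq_averageAt {t : Fin T} (ht : t.val + 1 < T) :
    (fun h m => Real.log (Zcond Q φ t h m)) =
      Q.averageAt ⟨t + 1, ht⟩ (fun h m => Real.log (Zmarg Q φ ⟨t + 1, ht⟩ h m)) := by
  have hk : T - 1 - t.val = T - 1 - (t.val + 1) + 1 := by omega
  have hi : (⟨T - 1 - (T - 1 - (t.val + 1)), idx_lt T _⟩ : Fin T) = ⟨t.val + 1, ht⟩ :=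
    Fin.ext (show T - 1 - (T - 1 - (t.val + 1)) = t.val + 1 by omega)
  funext h m
  rw [Zcond, hk, Zaux, Real.log_exp, hi]
  rfl

end Partition

section Gibbs

variable (Q : MachinePolicy T H M) (φ : (Fin T → H) → (Fin T → M) → ℝ)

omit [Nonempty M] in
theorem Zmarg_pos (t : Fin T) (h : Fin T → H) (m : Fin T → M) : 0 < Zmarg Q φ t h m :=
  Finset.sum_pos (fun _ _ => Zcond_pos Q φ t _ m) Finset.univ_nonempty

variable (P : HumanModel T H M)

theorem expVal_log_Zcond {t : Fin T} (ht : t.val + 1 < T) :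
    expVal P Q (fun h m => Real.log (Zcond Q φ t h m)) =
      expVal P Q (fun h m => Real.log (Zmarg Q φ ⟨t + 1, ht⟩ h m)) := by
  rw [log_Zcond_eq_averageAt Q φ ht,
    expVal_averageAt P Q _ ((dependsOnPrefix_Zmarg Q φ _).comp Real.log)]

theorem expVal_log_Zmarg_zero :
    expVal P Q (fun h m => Real.log (Zmarg Q φ 0 h m)) = dualPartition Q φ := by
  have hψ := (dependsOnPrefix_Zmarg Q φ 0).comp Real.log
  have hconst : Q.averageAt 0 (fun h m => Real.log (Zmarg Q φ 0 h m)) =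
      fun _ _ => dualPartition Q φ :=
    funext₂ fun h m => (hψ.averageAt Q).eq_of_zero h _ m _
  rw [← expVal_averageAt P Q 0 hψ, hconst, expVal_const]

variable {Plam : HumanModel T H M}

omit [Nonempty M] in
theorem neg_log_cc_of_isGibbs (hG : IsGibbs Q φ Plam) (h : Fin T → H) (m : Fin T → M) :
    -Real.log (Plam.cc h m) =
      ∑ t, (Real.log (Zmarg Q φ t h m) - Real.log (Zcond Q φ t h m)) := by
  have hp t : Plam.p t h m (h t) = Zcond Q φ t h m / Zmarg Q φ t h m := by
    rw [hG t h m (h t), Function.update_eq_self]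
  have hZc t := (Zcond_pos Q φ t h m).ne'
  have hZm t := (Zmarg_pos Q φ t h m).ne'
  rw [HumanModel.cc, Real.log_prod fun t _ => by rw [hp t]; exact div_ne_zero (hZc t) (hZm t),
    ← Finset.sum_neg_distrib]
  exact Finset.sum_congr rfl fun t _ => by rw [hp t, Real.log_div (hZc t) (hZm t), neg_sub]

theorem expVal_neg_log_cc_of_isGibbs (hG : IsGibbs Q φ Plam) :
    expVal P Q (fun h m => -Real.log (Plam.cc h m)) = dualPartition Q φ - expVal P Q φ := by
  let u : ℕ → ℝ := fun n =>
    if hn : n < T then expVal P Q (fun h m => Real.log (Zmarg Q φ ⟨n, hn⟩ h m))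
    else expVal P Q φ
  have hmarg (t : Fin T) : expVal P Q (fun h m => Real.log (Zmarg Q φ t h m)) = u t := by
    simp [u, t.isLt]
  have hcond (t : Fin T) : expVal P Q (fun h m => Real.log (Zcond Q φ t h m)) = u (t + 1) := by
    by_cases ht : t.val + 1 < T
    · simp [u, ht, expVal_log_Zcond Q φ P ht]
    · simp [u, ht, Zcond_of_val_add_one_eq Q φ (show t.val + 1 = T by omega)]
  calc expVal P Q (fun h m => -Real.log (Plam.cc h m))
      = ∑ t : Fin T, (u t - u (t + 1)) := by
        simp_rw [neg_log_cc_of_isGibbs Q φ hG, expVal_sum, expVal_sub, hmarg, hcond]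
    _ = u 0 - u T := by
        rw [Fin.sum_univ_eq_sum_range (fun n => u n - u (n + 1)), Finset.sum_range_sub']
    _ = dualPartition Q φ - expVal P Q φ := by
        simp [u, NeZero.pos, expVal_log_Zmarg_zero]

end Gibbs

theorem gibbs_cross_entropy_telescopes_general
    {F G : Type*} [Fintype F] [Fintype G]
    (Q : MachinePolicy T H M)
    (f : F → (Fin T → H) → (Fin T → M) → ℝ) (g : G → (Fin T → H) → (Fin T → M) → ℝ)
    (lf : F → ℝ) (lg : G → ℝ)
    (Plam : HumanModel T H M)
    (hGibbs : IsGibbs Q (fun h m => (∑ i, lf i * f i h m) + (∑ j, lg j * g j h m)) Plam)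
    (P' : HumanModel T H M) :
    expVal P' Q (fun h m => - Real.log (Plam.cc h m)) =
      dualPartition Q (fun h m => (∑ i, lf i * f i h m) + (∑ j, lg j * g j h m)) -
        (∑ i, lf i * expVal P' Q (f i)) - (∑ j, lg j * expVal P' Q (g j)) := by
  rw [expVal_neg_log_cc_of_isGibbs Q _ P' hGibbs, expVal_add, expVal_sum, expVal_sum]
  simp only [expVal_const_mul]
  ring

/-- telescoping partition-function identity, Lemma 2 of Ziebart et al.:
for every machine policy `Q`, every `λ = (λ_f, λ_g)`, and every human model `P′`, the causal
cross-entropy of the causal Gibbs model `P_λ` satisfies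
`E_{P′Q}[−log P_λ(H^T‖M^T)] = Σ_{m_1} Q(m_1)·log Z_λ(m_1) − λ_f·E_{P′Q}[f] − λ_g·E_{P′Q}[g]`. -/
theorem gibbs_cross_entropy_telescopes [Nonempty H] [Nonempty M]
    {F G : Type*} [Fintype F] [Fintype G]
    (Q : MachinePolicy T H M)
    (f : F → (Fin T → H) → (Fin T → M) → ℝ) (g : G → (Fin T → H) → (Fin T → M) → ℝ)
    (lf : F → ℝ) (lg : G → ℝ)
    (Plam : HumanModel T H M)
    (hGibbs : IsGibbs Q (fun h m => (∑ i, lf i * f i h m) + (∑ j, lg j * g j h m)) Plam)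
    (P' : HumanModel T H M) :
    expVal P' Q (fun h m => - Real.log (Plam.cc h m)) =
      dualPartition Q (fun h m => (∑ i, lf i * f i h m) + (∑ j, lg j * g j h m)) -
        (∑ i, lf i * expVal P' Q (f i)) - (∑ j, lg j * expVal P' Q (g j)) :=
  gibbs_cross_entropy_telescopes_general Q f g lf lg Plam hGibbs P'
end

section
/- (Markov structure of the maximum causal entropy model under decomposable features, Lemma 1 / Corollary of the paper.) Suppose the machine policy Q is one-step Markov, Q(m_t | h^{t-1}, m^{t-1}) = Q_t(m_t | h_{t-1}, m_{t-1}), and all feature functions are decomposable: f(h^T,m^T) = Σ_{t=1}^T f_t(h_t,m_t) and g(h^T,m^T) = Σ_{t=1}^T g_t(h_t,m_t). Define the reduced recursion by Ẑ_{λ,T}(h_T|m_T) := exp(λ_f·f_T(h_T,m_T) + λ_g·g_T(h_T,m_T)); for 1 ≤ t < T, Ẑ_{λ,t}(h_t|m_t) := exp(λ_f·f_t(h_t,m_t) + λ_g·g_t(h_t,m_t) + Σ_{m_{t+1}∈𝓜} Q_{t+1}(m_{t+1} | h_t, m_t)·log Ẑ_{λ,t+1}(m_{t+1})), where Ẑ_{λ,t}(m_t)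 := Σ_{h_t∈𝓗} Ẑ_{λ,t}(h_t|m_t). Then for every λ, the causal Gibbs model satisfies P_λ(h_t | h^{t-1}, m^t) = Ẑ_{λ,t}(h_t|m_t) / Ẑ_{λ,t}(m_t) for all t and all histories; in particular P_λ is one-step Markov and depends only on (t, h_t, m_t). -/
variable {T : ℕ} {H M : Type*} [Fintype H] [Fintype M]

variable [NeZero T]

variable [Nonempty H] [Nonempty M]

/-- `Q` is one-step Markov: `Q(m_t | h^{t-1}, m^{t-1})` depends only on `(t, h_{t-1}, m_{t-1})`. -/
def MachinePolicy.IsMarkov (Q : MachinePolicy T H M) : Prop :=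
  ∀ (t : Fin T) (h h' : Fin T → H) (m m' : Fin T → M),
    (∀ s : Fin T, (s : ℕ) + 1 = (t : ℕ) → (h s = h' s ∧ m s = m' s)) →
    Q.q t h m = Q.q t h' m'

/-- The reduced backward recursion `Ẑ_{λ,t}(h_t | m_t)` for decomposable features,
parameterized by fuel `k = (T-1) - t`; `ψ t a b` plays the role of
`λ_f·f_t(a,b) + λ_g·g_t(a,b)`, and the one-step Markov kernel `Q_{t+1}(· | h_t, m_t)` is
evaluated on constant sequences. -/
noncomputable def Zred (Q : MachinePolicy T H M) (ψ : Fin T → H → M → ℝ) :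
    ℕ → H → M → ℝ
  | 0, a, b => Real.exp (ψ ⟨T - 1, idx_lt T 0⟩ a b)
  | k + 1, a, b =>
      Real.exp (ψ ⟨T - 1 - (k + 1), idx_lt T (k + 1)⟩ a b +
        ∑ b' : M, Q.q ⟨T - 1 - k, idx_lt T k⟩ (fun _ => a) (fun _ => b) b' *
          Real.log (∑ a' : H, Zred Q ψ k a' b'))

lemma Zred_pos (Q : MachinePolicy T H M) (ψ : Fin T → H → M → ℝ) (k : ℕ) (a : H) (b : M) :
    0 < Zred Q ψ k a b := by
  cases k <;> exact Real.exp_pos _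

lemma filter_lt_succ (n : ℕ) (hn : n < T) :
    (Finset.univ.filter (fun s : Fin T => (s : ℕ) < n + 1)) =
      insert ⟨n, hn⟩ (Finset.univ.filter (fun s : Fin T => (s : ℕ) < n)) := by
  ext s
  simp only [Finset.mem_filter, Finset.mem_insert, Finset.mem_univ, true_and, Fin.ext_iff]
  omega

lemma Zaux_eq_Zred (Q : MachinePolicy T H M) (hQM : Q.IsMarkov) (ψ : Fin T → H → M → ℝ) :
    ∀ k, k ≤ T - 1 → ∀ (h : Fin T → H) (m : Fin T → M),
      Zaux Q (fun h m => ∑ t, ψ t (h t) (m t)) k h m =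
        Real.exp (∑ s ∈ Finset.univ.filter (fun s : Fin T => (s : ℕ) < T - 1 - k),
            ψ s (h s) (m s)) *
          Zred Q ψ k (h ⟨T - 1 - k, idx_lt T k⟩) (m ⟨T - 1 - k, idx_lt T k⟩) := by
  intro k
  induction k with
  | zero =>
    intro _ h m
    have hnm : (⟨T - 1, idx_lt T 0⟩ : Fin T) ∉
        Finset.univ.filter (fun s : Fin T => (s : ℕ) < T - 1) := by
      simp
    have huniv : insert (⟨T - 1, idx_lt T 0⟩ : Fin T)
        (Finset.univ.filter (fun s : Fin T => (s : ℕ) < T - 1)) = Finset.univ := by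
      apply Finset.eq_univ_iff_forall.mpr
      intro s
      by_cases hlt : (s : ℕ) < T - 1
      · exact Finset.mem_insert_of_mem (by simp [hlt])
      · have hs : s = ⟨T - 1, idx_lt T 0⟩ := by
          apply Fin.ext
          have := s.isLt
          show (s : ℕ) = T - 1
          omega
        simp [hs]
    have hZ : Zaux Q (fun h m => ∑ t, ψ t (h t) (m t)) 0 h m =
        Real.exp (∑ t, ψ t (h t) (m t)) := rfl
    have hZr : Zred Q ψ 0 (h ⟨T - 1 - 0, idx_lt T 0⟩) (m ⟨T - 1 - 0, idx_lt T 0⟩) =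
        Real.exp (ψ ⟨T - 1, idx_lt T 0⟩ (h ⟨T - 1, idx_lt T 0⟩) (m ⟨T - 1, idx_lt T 0⟩)) := rfl
    have hfilt : (Finset.univ.filter (fun s : Fin T => (s : ℕ) < T - 1 - 0)) =
        (Finset.univ.filter (fun s : Fin T => (s : ℕ) < T - 1)) := by
      simp
    have hsum : (∑ t : Fin T, ψ t (h t) (m t)) =
        ψ ⟨T - 1, idx_lt T 0⟩ (h ⟨T - 1, idx_lt T 0⟩) (m ⟨T - 1, idx_lt T 0⟩) +
          ∑ s ∈ Finset.univ.filter (fun s : Fin T => (s : ℕ) < T - 1), ψ s (h s) (m s) := by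
      conv_lhs => rw [← huniv]
      rw [Finset.sum_insert hnm]
    rw [hZ, hZr, hfilt, hsum, Real.exp_add]
    ring
  | succ k ih =>
    intro hk h m
    have hk' : k ≤ T - 1 := Nat.le_of_succ_le hk
    have harith : T - 1 - k = (T - 1 - (k + 1)) + 1 := by omega
    set t0 : Fin T := ⟨T - 1 - (k + 1), idx_lt T (k + 1)⟩ with ht0
    set t1 : Fin T := ⟨T - 1 - k, idx_lt T k⟩ with ht1
    set S : M → ℝ := fun b => ∑ a' : H, Zred Q ψ k a' b with hS
    have hSpos : ∀ b, 0 < S b := fun b =>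
      Finset.sum_pos (fun a _ => Zred_pos Q ψ k a b) Finset.univ_nonempty
    set D : ℝ := ∑ s ∈ Finset.univ.filter (fun s : Fin T => (s : ℕ) < T - 1 - k),
      ψ s (h s) (m s) with hD
    -- inner sums
    have hinner : ∀ b : M,
        (∑ a : H, Zaux Q (fun h m => ∑ t, ψ t (h t) (m t)) k
          (Function.update h t1 a) (Function.update m t1 b)) = Real.exp D * S b := by
      intro b
      have : ∀ a : H, Zaux Q (fun h m => ∑ t, ψ t (h t) (m t)) k
          (Function.update h t1 a) (Function.update m t1 b) = Real.exp D * Zred Q ψ k a b := by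
        intro a
        rw [ih hk' (Function.update h t1 a) (Function.update m t1 b)]
        have hsum : (∑ s ∈ Finset.univ.filter (fun s : Fin T => (s : ℕ) < T - 1 - k),
            ψ s (Function.update h t1 a s) (Function.update m t1 b s)) = D := by
          apply Finset.sum_congr rfl
          intro s hs
          simp only [Finset.mem_filter, Finset.mem_univ, true_and] at hs
          have hne : s ≠ t1 := by
            intro hEq; rw [hEq] at hs; simp [ht1] at hs
          rw [Function.update_of_ne hne, Function.update_of_ne hne]
        rw [hsum, Function.update_self, Function.update_self]
      rw [Finset.sum_congr rfl (fun a _ => this a), ← Finset.mul_sum]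
    have hQeq : ∀ b : M, Q.q t1 h m b = Q.q t1 (fun _ => h t0) (fun _ => m t0) b := by
      intro b
      have := hQM t1 h (fun _ => h t0) m (fun _ => m t0) (by
        intro s hs
        have h1 : (s : ℕ) + 1 = T - 1 - k := hs
        have hst : s = t0 := by
          apply Fin.ext
          show (s : ℕ) = T - 1 - (k + 1)
          omega
        rw [hst]
        exact ⟨rfl, rfl⟩)
      rw [this]
    -- split D
    have hDsplit : D = ψ t0 (h t0) (m t0) +
        ∑ s ∈ Finset.univ.filter (fun s : Fin T => (s : ℕ) < T - 1 - (k + 1)),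
          ψ s (h s) (m s) := by
      have hnm : t0 ∉ Finset.univ.filter (fun s : Fin T => (s : ℕ) < T - 1 - (k + 1)) := by
        simp [ht0]
      rw [hD, harith, filter_lt_succ (T - 1 - (k + 1)) (idx_lt T (k + 1)),
        Finset.sum_insert hnm]
    have hZaux : Zaux Q (fun h m => ∑ t, ψ t (h t) (m t)) (k + 1) h m =
        Real.exp (∑ b : M, Q.q t1 h m b * Real.log
          (∑ a : H, Zaux Q (fun h m => ∑ t, ψ t (h t) (m t)) k
            (Function.update h t1 a) (Function.update m t1 b))) := rfl
    have hZred : Zred Q ψ (k + 1) (h t0) (m t0) =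
        Real.exp (ψ t0 (h t0) (m t0) +
          ∑ b' : M, Q.q t1 (fun _ => h t0) (fun _ => m t0) b' * Real.log (S b')) := rfl
    have hlog : ∀ b : M,
        Real.log (∑ a : H, Zaux Q (fun h m => ∑ t, ψ t (h t) (m t)) k
          (Function.update h t1 a) (Function.update m t1 b)) = D + Real.log (S b) := by
      intro b
      rw [hinner b, Real.log_mul (Real.exp_ne_zero D) (ne_of_gt (hSpos b)), Real.log_exp]
    have hsum2 : (∑ b : M, Q.q t1 h m b *
        Real.log (∑ a : H, Zaux Q (fun h m => ∑ t, ψ t (h t) (m t)) k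
          (Function.update h t1 a) (Function.update m t1 b))) =
        D + ∑ b : M, Q.q t1 (fun _ => h t0) (fun _ => m t0) b * Real.log (S b) := by
      calc (∑ b : M, Q.q t1 h m b *
          Real.log (∑ a : H, Zaux Q (fun h m => ∑ t, ψ t (h t) (m t)) k
            (Function.update h t1 a) (Function.update m t1 b)))
          = ∑ b : M, (Q.q t1 h m b * D + Q.q t1 h m b * Real.log (S b)) := by
            apply Finset.sum_congr rfl; intro b _; rw [hlog b]; ring
        _ = (∑ b : M, Q.q t1 h m b) * D + ∑ b : M, Q.q t1 h m b * Real.log (S b) := by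
            rw [Finset.sum_add_distrib, Finset.sum_mul]
        _ = D + ∑ b : M, Q.q t1 (fun _ => h t0) (fun _ => m t0) b * Real.log (S b) := by
            rw [Q.sum_one t1 h m, one_mul]
            congr 1
            exact Finset.sum_congr rfl (fun b _ => by rw [hQeq b])
    rw [hZaux, hsum2, hZred, hDsplit, Real.exp_add, Real.exp_add, Real.exp_add]
    ring

/-- Markov structure of the maximum causal entropy model under decomposable
features: if `Q` is one-step Markov and all feature functions are decomposable, then the
causal Gibbs model satisfies `P_λ(h_t | h^{t-1}, m^t) = Ẑ_{λ,t}(h_t|m_t) / Ẑ_{λ,t}(m_t)`;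
in particular `P_λ` is one-step Markov and depends only on `(t, h_t, m_t)`. -/
theorem gibbs_markov_of_decomposable [Nonempty H] [Nonempty M]
    {F G : Type*} [Fintype F] [Fintype G]
    (Q : MachinePolicy T H M) (hQM : Q.IsMarkov)
    (f : F → (Fin T → H) → (Fin T → M) → ℝ) (g : G → (Fin T → H) → (Fin T → M) → ℝ)
    (ft : F → Fin T → H → M → ℝ) (gt : G → Fin T → H → M → ℝ)
    (hf : ∀ i h m, f i h m = ∑ t, ft i t (h t) (m t))
    (hg : ∀ j h m, g j h m = ∑ t, gt j t (h t) (m t))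
    (lf : F → ℝ) (lg : G → ℝ)
    (Plam : HumanModel T H M)
    (hGibbs : IsGibbs Q (fun h m => (∑ i, lf i * f i h m) + (∑ j, lg j * g j h m)) Plam) :
    ∀ (t : Fin T) (h : Fin T → H) (m : Fin T → M) (a : H),
      Plam.p t h m a =
        Zred Q (fun t' a' b' => (∑ i, lf i * ft i t' a' b') + (∑ j, lg j * gt j t' a' b'))
            (T - 1 - t.val) a (m t) /
          ∑ a' : H,
            Zred Q (fun t' a'' b' => (∑ i, lf i * ft i t' a'' b') + (∑ j, lg j * gt j t' a'' b'))
              (T - 1 - t.val) a' (m t) := by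
  intro t h m a
  set ψ : Fin T → H → M → ℝ :=
    fun t' a' b' => (∑ i, lf i * ft i t' a' b') + (∑ j, lg j * gt j t' a' b') with hψ
  have hφ : (fun (h : Fin T → H) (m : Fin T → M) =>
      (∑ i, lf i * f i h m) + (∑ j, lg j * g j h m)) =
      (fun h m => ∑ t, ψ t (h t) (m t)) := by
    funext h m
    simp only [hψ, hf, hg, Finset.mul_sum]
    rw [Finset.sum_comm (γ := F), Finset.sum_comm (γ := G), ← Finset.sum_add_distrib]
  rw [hGibbs t h m a, hφ]
  set k : ℕ := T - 1 - t.val with hkdef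
  have hk : k ≤ T - 1 := Nat.sub_le _ _
  have htk : (⟨T - 1 - k, idx_lt T k⟩ : Fin T) = t := by
    apply Fin.ext
    have := t.isLt
    simp only [hkdef]
    omega
  set D : ℝ := ∑ s ∈ Finset.univ.filter (fun s : Fin T => (s : ℕ) < T - 1 - k),
    ψ s (h s) (m s) with hD
  have hnum : ∀ a' : H, Zcond Q (fun h m => ∑ t, ψ t (h t) (m t)) t
      (Function.update h t a') m = Real.exp D * Zred Q ψ k a' (m t) := by
    intro a'
    show Zaux Q (fun h m => ∑ t, ψ t (h t) (m t)) (T - 1 - t.val)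
        (Function.update h t a') m = _
    rw [← hkdef, Zaux_eq_Zred Q hQM ψ k hk]
    rw [htk]
    have hsum : (∑ s ∈ Finset.univ.filter (fun s : Fin T => (s : ℕ) < T - 1 - k),
        ψ s (Function.update h t a' s) (m s)) = D := by
      apply Finset.sum_congr rfl
      intro s hs
      simp only [Finset.mem_filter, Finset.mem_univ, true_and] at hs
      have hne : s ≠ t := by
        intro hEq
        rw [hEq] at hs
        omega
      rw [Function.update_of_ne hne]
    rw [hsum, Function.update_self]
  have hZm : Zmarg Q (fun h m => ∑ t, ψ t (h t) (m t)) t h m =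
      Real.exp D * ∑ a' : H, Zred Q ψ k a' (m t) := by
    unfold Zmarg
    rw [Finset.sum_congr rfl (fun a' _ => hnum a'), ← Finset.mul_sum]
  rw [hnum a, hZm, hkdef]
  exact mul_div_mul_left _ _ (Real.exp_ne_zero D)
end
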